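/- Let A ∈ B(H) be positive and N, E, X ∈ B(H). Form the block operator T = [[N, E],[0, X]] on H ⊕ H with respect to the positive operator A ⊕ A. Assume N is an A-isometry (N*AN = A), E = NEX, and N*AE = AEX. Then T is (A⊕A)-isosymmetric (i.e. T*²(A⊕A)T − T*(A⊕A)T² − T*(A⊕A) + (A⊕A)T = 0) if and only if X is A-isosymmetric (X*²AX − X*AX² − X*A + AX = 0). -/

import Mathlib

/-! Pairing the isosymmetry defect of `T` with vectors `x = (x₁, x₂)`, `y = (y₁, y₂)` gives the
defect form of `X` at `(x₂, y₂)` plus terms in the first coordinate. The relations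
`⟪N a, A N b⟫ = ⟪a, A b⟫`, `⟪N a, A E b⟫ = ⟪a, A E X b⟫` and, by self-adjointness of `A`, the mirror
`⟪E a, A N b⟫ = ⟪E X a, A b⟫` make those first-coordinate terms cancel identically, so the two
defect forms agree and `T` is isosymmetric exactly when `X` is. -/

open ContinuousLinearMap

/-- An operator `S` is `B`-isosymmetric. -/
def IsIsoSym {K : Type*} [NormedAddCommGroup K] [InnerProductSpace ℂ K]
    [CompleteSpace K] (B S : K →L[ℂ] K) : Prop :=
  ((adjoint S) ^ 2) ∘L B ∘L S - (adjoint S) ∘L B ∘L (S ^ 2) - (adjoint S) ∘L B + B ∘L S = 0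

open scoped InnerProductSpace

section Form

variable {K : Type*} [NormedAddCommGroup K] [InnerProductSpace ℂ K]

noncomputable def isoSymForm (B S : K →L[ℂ] K) (x y : K) : ℂ :=
  ⟪S (S x), B (S y)⟫_ℂ - ⟪S x, B (S (S y))⟫_ℂ - ⟪S x, B y⟫_ℂ + ⟪x, B (S y)⟫_ℂ

variable [CompleteSpace K]

lemma inner_isIsoSym_apply (B S : K →L[ℂ] K) (x y : K) :
    ⟪x, ((((adjoint S) ^ 2) ∘L B ∘L S - adjoint S ∘L B ∘L (S ^ 2) - adjoint S ∘L B + B ∘L S :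
      K →L[ℂ] K) y)⟫_ℂ
      = isoSymForm B S x y := by
  simp [isoSymForm, sq, mul_apply_eq_comp, adjoint_inner_right]

theorem isIsoSym_iff_isoSymForm_eq_zero (B S : K →L[ℂ] K) :
    IsIsoSym B S ↔ ∀ x y, isoSymForm B S x y = 0 := by
  simp only [← inner_isIsoSym_apply]
  constructor
  · intro h x y
    rw [h, zero_apply, inner_zero_right]
  · intro h
    ext y
    exact ext_inner_left ℂ fun x ↦ (h x y).trans (inner_zero_right x).symm

lemma inner_apply_eq_of_adjoint_comp_eq {N B C : K →L[ℂ] K} (h : adjoint N ∘L B = C) (a b : K) :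
    ⟪N a, B b⟫_ℂ = ⟪a, C b⟫_ℂ := by
  rw [← h, comp_apply, adjoint_inner_right]

end Form

section Block

variable {H : Type*} [NormedAddCommGroup H] [InnerProductSpace ℂ H]

def blockUpperTriangular (N E X : H →L[ℂ] H) : WithLp 2 (H × H) →L[ℂ] WithLp 2 (H × H) :=
  ((WithLp.prodContinuousLinearEquiv 2 ℂ H H).symm : (H × H) →L[ℂ] WithLp 2 (H × H)) ∘L
    ((N ∘L fst ℂ H H + E ∘L snd ℂ H H).prod (X ∘L snd ℂ H H)) ∘L
    (WithLp.prodContinuousLinearEquiv 2 ℂ H H : WithLp 2 (H × H) →L[ℂ] H × H)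

def blockDiagonal (A : H →L[ℂ] H) : WithLp 2 (H × H) →L[ℂ] WithLp 2 (H × H) :=
  ((WithLp.prodContinuousLinearEquiv 2 ℂ H H).symm : (H × H) →L[ℂ] WithLp 2 (H × H)) ∘L
    (A.prodMap A) ∘L (WithLp.prodContinuousLinearEquiv 2 ℂ H H : WithLp 2 (H × H) →L[ℂ] H × H)

variable (A N E X : H →L[ℂ] H) (x : WithLp 2 (H × H))

@[simp] lemma blockUpperTriangular_fst : (blockUpperTriangular N E X x).fst = N x.fst + E x.snd :=
  rfl

@[simp] lemma blockUpperTriangular_snd : (blockUpperTriangular N E X x).snd = X x.snd := rfl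

@[simp] lemma blockDiagonal_fst : (blockDiagonal A x).fst = A x.fst := rfl

@[simp] lemma blockDiagonal_snd : (blockDiagonal A x).snd = A x.snd := rfl

variable {A N E X}

theorem isoSymForm_blockUpperTriangular [CompleteSpace H] (hA : IsSelfAdjoint A)
    (hN : adjoint N ∘L A ∘L N = A) (hNAE : adjoint N ∘L A ∘L E = A ∘L E ∘L X)
    (x y : WithLp 2 (H × H)) :
    isoSymForm (blockDiagonal A) (blockUpperTriangular N E X) x y = isoSymForm A X x.snd y.snd := by
  have hNN (a b : H) : ⟪N a, A (N b)⟫_ℂ = ⟪a, A b⟫_ℂ := inner_apply_eq_of_adjoint_comp_eq hN a b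
  have hNE (a b : H) : ⟪N a, A (E b)⟫_ℂ = ⟪a, A (E (X b))⟫_ℂ :=
    inner_apply_eq_of_adjoint_comp_eq hNAE a b
  have hAsymm (a b : H) : ⟪A a, b⟫_ℂ = ⟪a, A b⟫_ℂ := hA.isSymmetric a b
  have hEN (a b : H) : ⟪E a, A (N b)⟫_ℂ = ⟪E (X a), A b⟫_ℂ := by
    rw [← inner_conj_symm, hAsymm, hNE, inner_conj_symm, hAsymm]
  simp only [isoSymForm, WithLp.prod_inner_apply, WithLp.ofLp_fst, WithLp.ofLp_snd,
    blockUpperTriangular_fst, blockUpperTriangular_snd, blockDiagonal_fst, blockDiagonal_snd,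
    map_add, inner_add_left, inner_add_right, hNN, hNE, hEN]
  ring

end Block

theorem block_triangular_isosymmetric_general {H : Type*} [NormedAddCommGroup H]
    [InnerProductSpace ℂ H] [CompleteSpace H] (A N E X : H →L[ℂ] H) (hA : A.IsPositive)
    (hN : (adjoint N) ∘L A ∘L N = A)
    (hNAE : (adjoint N) ∘L A ∘L E = A ∘L E ∘L X) :
    (let e : WithLp 2 (H × H) ≃L[ℂ] H × H := WithLp.prodContinuousLinearEquiv 2 ℂ H H
     let Tblock : WithLp 2 (H × H) →L[ℂ] WithLp 2 (H × H) :=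
       (e.symm : (H × H) →L[ℂ] WithLp 2 (H × H)) ∘L
         ((N ∘L ContinuousLinearMap.fst ℂ H H + E ∘L ContinuousLinearMap.snd ℂ H H).prod
            (X ∘L ContinuousLinearMap.snd ℂ H H)) ∘L
         (e : WithLp 2 (H × H) →L[ℂ] H × H)
     let Ablock : WithLp 2 (H × H) →L[ℂ] WithLp 2 (H × H) :=
       (e.symm : (H × H) →L[ℂ] WithLp 2 (H × H)) ∘L (A.prodMap A) ∘L
         (e : WithLp 2 (H × H) →L[ℂ] H × H)
     IsIsoSym Ablock Tblock) ↔ IsIsoSym A X := by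
  change IsIsoSym (blockDiagonal A) (blockUpperTriangular N E X) ↔ _
  simp only [isIsoSym_iff_isoSymForm_eq_zero,
    isoSymForm_blockUpperTriangular hA.isSelfAdjoint hN hNAE]
  constructor
  · intro h a b
    simpa using h (WithLp.toLp 2 (0, a)) (WithLp.toLp 2 (0, b))
  · intro h x y
    exact h x.snd y.snd

theorem block_triangular_isosymmetric {H : Type*} [NormedAddCommGroup H]
    [InnerProductSpace ℂ H] [CompleteSpace H] (A N E X : H →L[ℂ] H) (hA : A.IsPositive)
    (hN : (adjoint N) ∘L A ∘L N = A) (hE : E = N ∘L E ∘L X)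
    (hNAE : (adjoint N) ∘L A ∘L E = A ∘L E ∘L X) :
    (let e : WithLp 2 (H × H) ≃L[ℂ] H × H := WithLp.prodContinuousLinearEquiv 2 ℂ H H
     let Tblock : WithLp 2 (H × H) →L[ℂ] WithLp 2 (H × H) :=
       (e.symm : (H × H) →L[ℂ] WithLp 2 (H × H)) ∘L
         ((N ∘L ContinuousLinearMap.fst ℂ H H + E ∘L ContinuousLinearMap.snd ℂ H H).prod
            (X ∘L ContinuousLinearMap.snd ℂ H H)) ∘L
         (e : WithLp 2 (H × H) →L[ℂ] H × H)
     let Ablock : WithLp 2 (H × H) →L[ℂ] WithLp 2 (H × H) :=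
       (e.symm : (H × H) →L[ℂ] WithLp 2 (H × H)) ∘L (A.prodMap A) ∘L
         (e : WithLp 2 (H × H) →L[ℂ] H × H)
     IsIsoSym Ablock Tblock) ↔ IsIsoSym A X :=
  block_triangular_isosymmetric_general A N E X hA hN hNAE
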